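/- Let s⋆ : I → S assign to each region i a sector s⋆(i), and let M ≥ 0 satisfy w_{is} ≤ M for every i ∈ I and every s ∈ S with s ≠ s⋆(i) (so M bounds the share of every sector other than each region's designated largest sector). Then ∑_{i∈I} ∑_{j∈I} ∑_{s,t∈S, s≠t} w_{is} w_{it} w_{js} w_{jt} ≤ 2M · ∑_{t∈S} n_t². (Deterministic inequality showing that if the share of the second-largest sector is uniformly small then T_N = ∑_{s≠t}(∑_i w_{is}w_{it})²/∑_s n_s² is small, a sufficient condition for validity of the proposed standard errors under heterogeneous effects.) -/

import Mathlib

/-!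
Write `n t = ∑ i, w i t` and `w̄ s t = ∑ i, w i s * w i t`, so that the left-hand side is
`∑_{s ≠ t} w̄ s t ^ 2`. For `s ≠ t` at most one of `s, t` is `s⋆ i`, so
`w i s * w i t ≤ M * (w i s + w i t)` and hence `w̄ s t ≤ M * (n s + n t)`. This gives
`∑_{s ≠ t} w̄ s t ^ 2 ≤ M ∑_{s,t} w̄ s t (n s + n t) = 2M ∑_s n s ∑_t w̄ s t`, and
`∑_t w̄ s t ≤ n s` because every region's shares sum to at most one.
-/

open Finset

theorem Finset.sum_sum_sum_comm {α β γ M : Type*} [AddCommMonoid M] (s : Finset α)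
    (t : Finset β) (u : Finset γ) (f : α → β → γ → M) :
    ∑ i ∈ s, ∑ j ∈ t, ∑ k ∈ u, f i j k = ∑ k ∈ u, ∑ i ∈ s, ∑ j ∈ t, f i j k :=
  calc ∑ i ∈ s, ∑ j ∈ t, ∑ k ∈ u, f i j k = ∑ i ∈ s, ∑ k ∈ u, ∑ j ∈ t, f i j k :=
        sum_congr rfl fun _ _ => sum_comm
    _ = ∑ k ∈ u, ∑ i ∈ s, ∑ j ∈ t, f i j k := sum_comm

theorem mul_le_mul_add_of_le_or_le {a b M : ℝ} (ha : 0 ≤ a) (hb : 0 ≤ b) (hM : 0 ≤ M)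
    (h : a ≤ M ∨ b ≤ M) : a * b ≤ M * (a + b) := by
  rcases h with h | h <;> nlinarith [mul_nonneg hM ha, mul_nonneg hM hb]

section Sectors

variable {I S : Type*} [Fintype I] (w : I → S → ℝ)

def sectorSize (t : S) : ℝ := ∑ i, w i t

def overlap (s t : S) : ℝ := ∑ i, w i s * w i t

variable {w}

theorem overlap_comm (s t : S) : overlap w s t = overlap w t s :=
  sum_congr rfl fun _ _ => mul_comm _ _

theorem overlap_nonneg (hw : ∀ i s, 0 ≤ w i s) (s t : S) : 0 ≤ overlap w s t :=
  sum_nonneg fun i _ => mul_nonneg (hw i s) (hw i t)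

theorem sectorSize_nonneg (hw : ∀ i s, 0 ≤ w i s) (t : S) : 0 ≤ sectorSize w t :=
  sum_nonneg fun i _ => hw i t

theorem overlap_sq (s t : S) :
    overlap w s t ^ 2 = ∑ i, ∑ j, w i s * w i t * w j s * w j t := by
  rw [sq, overlap, sum_mul_sum]
  exact sum_congr rfl fun _ _ => sum_congr rfl fun _ _ => by ring

theorem sum_overlap_le_sectorSize [Fintype S] (hw : ∀ i s, 0 ≤ w i s)
    (hw1 : ∀ i, ∑ s, w i s ≤ 1) (s : S) : ∑ t, overlap w s t ≤ sectorSize w s :=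
  calc ∑ t, overlap w s t = ∑ i, w i s * ∑ t, w i t := by
        simp only [overlap]; rw [sum_comm]; simp only [mul_sum]
    _ ≤ ∑ i, w i s * 1 := sum_le_sum fun i _ => mul_le_mul_of_nonneg_left (hw1 i) (hw i s)
    _ = sectorSize w s := by simp [sectorSize]

theorem overlap_le_of_ne (hw : ∀ i s, 0 ≤ w i s) (sstar : I → S) {M : ℝ} (hM : 0 ≤ M)
    (hsmall : ∀ i, ∀ s, s ≠ sstar i → w i s ≤ M) {s t : S} (hst : s ≠ t) :
    overlap w s t ≤ M * (sectorSize w s + sectorSize w t) :=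
  calc overlap w s t ≤ ∑ i, M * (w i s + w i t) := by
        refine sum_le_sum fun i _ => mul_le_mul_add_of_le_or_le (hw i s) (hw i t) hM ?_
        by_cases hs : s = sstar i
        · exact Or.inr (hsmall i t fun ht => hst (hs.trans ht.symm))
        · exact Or.inl (hsmall i s hs)
    _ = M * (sectorSize w s + sectorSize w t) := by
        rw [← mul_sum, sum_add_distrib, sectorSize, sectorSize]

theorem sum_overlap_mul_add_le [Fintype S] (hw : ∀ i s, 0 ≤ w i s)
    (hw1 : ∀ i, ∑ s, w i s ≤ 1) :
    ∑ s, ∑ t, overlap w s t * (sectorSize w s + sectorSize w t)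
      ≤ 2 * ∑ s, sectorSize w s ^ 2 :=
  calc ∑ s, ∑ t, overlap w s t * (sectorSize w s + sectorSize w t)
      = 2 * ∑ s, sectorSize w s * ∑ t, overlap w s t := by
        have hswap : ∑ s, ∑ t, overlap w s t * sectorSize w t
            = ∑ s, ∑ t, overlap w s t * sectorSize w s := by
          rw [sum_comm]
          exact sum_congr rfl fun s _ => sum_congr rfl fun t _ => by rw [overlap_comm]
        simp only [mul_add, sum_add_distrib, hswap, ← two_mul, mul_sum]
        simp only [mul_comm (overlap w _ _)]
    _ ≤ 2 * ∑ s, sectorSize w s ^ 2 := by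
        gcongr with s
        rw [sq]
        exact mul_le_mul_of_nonneg_left (sum_overlap_le_sectorSize hw hw1 s)
          (sectorSize_nonneg hw s)

theorem sum_ne_mul_eq_sum_ne_overlap_sq [Fintype S] [DecidableEq S] :
    ∑ i, ∑ j, ∑ s, ∑ t ∈ univ.filter (fun t => s ≠ t), w i s * w i t * w j s * w j t
      = ∑ s, ∑ t ∈ univ.filter (fun t => s ≠ t), overlap w s t ^ 2 := by
  rw [sum_sum_sum_comm]
  refine sum_congr rfl fun s _ => ?_
  rw [sum_sum_sum_comm]
  exact sum_congr rfl fun t _ => (overlap_sq s t).symm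

end Sectors

theorem stmt_9_general {I S : Type*} [Fintype I] [Fintype S] [DecidableEq S]
    (w : I → S → ℝ) (hw : ∀ i s, 0 ≤ w i s) (hw1 : ∀ i, ∑ s, w i s ≤ 1)
    (sstar : I → S) (M : ℝ) (hM : 0 ≤ M)
    (hsmall : ∀ i, ∀ s, s ≠ sstar i → w i s ≤ M) :
    ∑ i, ∑ j, ∑ s, ∑ t ∈ Finset.univ.filter (fun t => s ≠ t),
        w i s * w i t * w j s * w j t
      ≤ 2 * M * ∑ t, (∑ i, w i t) ^ 2 := by
  rw [sum_ne_mul_eq_sum_ne_overlap_sq]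
  calc ∑ s, ∑ t ∈ univ.filter (fun t => s ≠ t), overlap w s t ^ 2
      ≤ ∑ s, ∑ t ∈ univ.filter (fun t => s ≠ t),
          M * (overlap w s t * (sectorSize w s + sectorSize w t)) := by
        refine sum_le_sum fun s _ => sum_le_sum fun t ht => ?_
        rw [sq, mul_left_comm]
        exact mul_le_mul_of_nonneg_left
          (overlap_le_of_ne hw sstar hM hsmall (mem_filter.mp ht).2) (overlap_nonneg hw s t)
    _ ≤ M * ∑ s, ∑ t, overlap w s t * (sectorSize w s + sectorSize w t) := by
        rw [mul_sum]
        refine sum_le_sum fun s _ => ?_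
        rw [mul_sum]
        exact sum_le_sum_of_subset_of_nonneg (filter_subset _ _) fun t _ _ =>
          mul_nonneg hM (mul_nonneg (overlap_nonneg hw s t)
            (add_nonneg (sectorSize_nonneg hw s) (sectorSize_nonneg hw t)))
    _ ≤ 2 * M * ∑ t, sectorSize w t ^ 2 := by
        rw [mul_comm 2 M, mul_assoc]
        exact mul_le_mul_of_nonneg_left (sum_overlap_mul_add_le hw hw1) hM

/-- If every sector other than each region's designated largest sector `s⋆ i` has share at
most `M`, then `∑ i j, ∑ s ≠ t, w i s * w i t * w j s * w j t ≤ 2 * M * ∑ t, n t ^ 2`,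
where `n t = ∑ i, w i t`.  (Sufficient condition for `T_N → 0` in the discussion of
inference under heterogeneous treatment effects.) -/
theorem stmt_9 {I S : Type*} [Fintype I] [Fintype S] [Nonempty I] [Nonempty S] [DecidableEq S]
    (w : I → S → ℝ) (hw : ∀ i s, 0 ≤ w i s) (hw1 : ∀ i, ∑ s, w i s ≤ 1)
    (sstar : I → S) (M : ℝ) (hM : 0 ≤ M)
    (hsmall : ∀ i, ∀ s, s ≠ sstar i → w i s ≤ M) :
    ∑ i, ∑ j, ∑ s, ∑ t ∈ Finset.univ.filter (fun t => s ≠ t),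
        w i s * w i t * w j s * w j t
      ≤ 2 * M * ∑ t, (∑ i, w i t) ^ 2 :=
  stmt_9_general w hw hw1 sstar M hM hsmall
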